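/- arXiv:2310.11188 — 4 statements merged into one kernel-verified Lean document; each statement's English description precedes it below -/
import Mathlib

section
/- Let p, q : Fin N → ℝ be probability distributions (nonnegative, summing to 1), let ℓ : Fin N → ℝ be nonnegative, and let η' > 0. If for every i, -η' * p i * ℓ i ≤ q i - p i ≤ η' * q i * (∑ k, p k * ℓ k), then ∑ i, |q i - p i| ≤ 2 * η' * ∑ k, p k * ℓ k. -/
theorem total_variation_update_bound (N : ℕ) (p q ℓ : Fin N → ℝ) (η' : ℝ)
    (hη : 0 < η')
    (hp0 : ∀ i, 0 ≤ p i) (hp1 : ∑ i, p i = 1)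
    (hq0 : ∀ i, 0 ≤ q i) (hq1 : ∑ i, q i = 1)
    (hℓ : ∀ i, 0 ≤ ℓ i)
    (hlow : ∀ i, -η' * p i * ℓ i ≤ q i - p i)
    (hhigh : ∀ i, q i - p i ≤ η' * q i * ∑ k, p k * ℓ k) :
    ∑ i, |q i - p i| ≤ 2 * η' * ∑ k, p k * ℓ k := by
  have key : ∀ i, |q i - p i| ≤ (q i - p i) + 2 * (η' * (p i * ℓ i)) := by
    intro i
    have hnn : 0 ≤ η' * (p i * ℓ i) :=
      mul_nonneg hη.le (mul_nonneg (hp0 i) (hℓ i))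
    have hl := hlow i
    rcases abs_cases (q i - p i) with ⟨h, _⟩ | ⟨h, _⟩ <;> nlinarith
  calc ∑ i, |q i - p i| ≤ ∑ i, ((q i - p i) + 2 * (η' * (p i * ℓ i))) :=
        Finset.sum_le_sum fun i _ => key i
    _ = (∑ i, q i - ∑ i, p i) + 2 * η' * ∑ k, p k * ℓ k := by
        simp only [Finset.sum_add_distrib, Finset.sum_sub_distrib, ← Finset.mul_sum]
        ring
    _ = 2 * η' * ∑ k, p k * ℓ k := by rw [hp1, hq1]; ring
end

section
/- Let p, q : Fin N → ℝ with q summing to 1, ℓ : Fin N → ℝ nonnegative, and η' > 0. Suppose W i > 0 for all i, p i = W i / (∑ k, W k), and q i = (W i * exp(-η' * ℓ i)) / (∑ k, W k * exp(-η' * ℓ k)). Then q i - p i ≥ -η' * p i * ℓ i for every i. -/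
theorem exp_weights_update_lower (N : ℕ) (W p q ℓ : Fin N → ℝ) (η' : ℝ)
    (hη : 0 < η') (hq1 : ∑ i, q i = 1) (hℓ : ∀ i, 0 ≤ ℓ i)
    (hW : ∀ i, 0 < W i)
    (hp : ∀ i, p i = W i / ∑ k, W k)
    (hq : ∀ i, q i = W i * Real.exp (-η' * ℓ i) / ∑ k, W k * Real.exp (-η' * ℓ k)) :
    ∀ i, -η' * p i * ℓ i ≤ q i - p i := by
  intro i
  have hNe : (Finset.univ : Finset (Fin N)).Nonempty := ⟨i, Finset.mem_univ i⟩
  have hS : 0 < ∑ k, W k := Finset.sum_pos (fun k _ => hW k) hNe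
  have hS' : 0 < ∑ k, W k * Real.exp (-η' * ℓ k) :=
    Finset.sum_pos (fun k _ => mul_pos (hW k) (Real.exp_pos _)) hNe
  have hle : ∑ k, W k * Real.exp (-η' * ℓ k) ≤ ∑ k, W k := by
    apply Finset.sum_le_sum
    intro k _
    have : Real.exp (-η' * ℓ k) ≤ 1 := by
      apply Real.exp_le_one_iff.mpr
      have := mul_nonneg hη.le (hℓ k)
      linarith
    nlinarith [ (hW k).le ]
  have h1 : W i * Real.exp (-η' * ℓ i) / ∑ k, W k ≤ q i := by
    rw [hq i]
    gcongr
    exact (mul_pos (hW i) (Real.exp_pos _)).le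
  have h2 : W i * (1 + -η' * ℓ i) / ∑ k, W k ≤ W i * Real.exp (-η' * ℓ i) / ∑ k, W k := by
    gcongr
    · exact (hW i).le
    · linarith [Real.add_one_le_exp (-η' * ℓ i)]
  have hpi : p i = W i / ∑ k, W k := hp i
  have : W i * (1 + -η' * ℓ i) / ∑ k, W k = p i + (-η' * ℓ i) * p i := by
    rw [hpi]; field_simp
  nlinarith [h1, h2]
end

section
/- Let p, q : Fin N → ℝ with p summing to 1, ℓ : Fin N → ℝ nonnegative, and η' > 0. Suppose W i > 0 for all i, p i = W i / (∑ k, W k), and q i = (W i * exp(-η' * ℓ i)) / (∑ k, W k * exp(-η' * ℓ k)). Then q i - p i ≤ η' * q i * ∑ k, p k * ℓ k for every i. -/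
theorem exp_weights_update_upper (N : ℕ) (W p q ℓ : Fin N → ℝ) (η' : ℝ)
    (hη : 0 < η') (hp1 : ∑ i, p i = 1) (hℓ : ∀ i, 0 ≤ ℓ i)
    (hW : ∀ i, 0 < W i)
    (hp : ∀ i, p i = W i / ∑ k, W k)
    (hq : ∀ i, q i = W i * Real.exp (-η' * ℓ i) / ∑ k, W k * Real.exp (-η' * ℓ k)) :
    ∀ i, q i - p i ≤ η' * q i * ∑ k, p k * ℓ k := by
  intro i
  set S := ∑ k, W k with hS
  set T := ∑ k, W k * Real.exp (-η' * ℓ k) with hT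
  have hSpos : 0 < S := Finset.sum_pos (fun k _ => hW k) ⟨i, Finset.mem_univ i⟩
  have hTpos : 0 < T :=
    Finset.sum_pos (fun k _ => mul_pos (hW k) (Real.exp_pos _)) ⟨i, Finset.mem_univ i⟩
  have hqi : 0 ≤ q i := by
    rw [hq i]
    exact div_nonneg (mul_nonneg (hW i).le (Real.exp_pos _).le) hTpos.le
  -- q i * T = W i * exp(-η' ℓ i)
  have hqT : q i * T = W i * Real.exp (-η' * ℓ i) := by
    rw [hq i]; field_simp
  -- q i * (T / S) ≤ p i
  have hstep : q i * (T / S) ≤ p i := by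
    rw [hp i, ← mul_div_assoc, hqT]
    apply div_le_div_of_nonneg_right _ hSpos.le
    have : Real.exp (-η' * ℓ i) ≤ 1 := by
      rw [Real.exp_le_one_iff]
      have := hℓ i
      nlinarith
    nlinarith [hW i]
  -- (S - T)/S = ∑ p k (1 - exp(-η' ℓ k)) ≤ η' ∑ p k ℓ k
  have hratio : (S - T) / S ≤ η' * ∑ k, p k * ℓ k := by
    have hsum : (S - T) / S = ∑ k, p k * (1 - Real.exp (-η' * ℓ k)) := by
      rw [eq_comm]
      have : ∀ k : Fin N, p k * (1 - Real.exp (-η' * ℓ k))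
          = (W k - W k * Real.exp (-η' * ℓ k)) / S := by
        intro k; rw [hp k]; field_simp
      rw [Finset.sum_congr rfl (fun k _ => this k), ← Finset.sum_div,
        Finset.sum_sub_distrib]
    rw [hsum, Finset.mul_sum]
    apply Finset.sum_le_sum
    intro k _
    have hpk : 0 ≤ p k := by rw [hp k]; exact div_nonneg (hW k).le hSpos.le
    have hexp : 1 - Real.exp (-η' * ℓ k) ≤ η' * ℓ k := by
      have := Real.add_one_le_exp (-η' * ℓ k)
      linarith
    calc p k * (1 - Real.exp (-η' * ℓ k)) ≤ p k * (η' * ℓ k) :=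
          mul_le_mul_of_nonneg_left hexp hpk
      _ = η' * (p k * ℓ k) := by ring
  have key : q i - p i ≤ q i * ((S - T) / S) := by
    have : q i - q i * (T / S) = q i * ((S - T) / S) := by
      field_simp
    linarith [hstep]
  calc q i - p i ≤ q i * ((S - T) / S) := key
    _ ≤ q i * (η' * ∑ k, p k * ℓ k) := mul_le_mul_of_nonneg_left hratio hqi
    _ = η' * q i * ∑ k, p k * ℓ k := by ring
end

section
/- Let W : Fin N → ℝ be positive weights, ℓ : Fin N → ℝ nonnegative, and η' > 0. Then (∑ i, W i * exp(-η' * ℓ i)) / (∑ i, W i) ≤ exp(-η' * ∑ i, p i * ℓ i + (η'^2 / 2) * ∑ i, p i * (ℓ i)^2), where p i = W i / (∑ k, W k). -/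
/-!
Averaging `exp (-x) ≤ 1 - x + x ^ 2 / 2` at `x = η' ℓ i` against the normalised weights `p`
bounds the ratio by `1 + y` with `y = -η' ∑ p i ℓ i + η' ^ 2 / 2 ∑ p i ℓ i ^ 2`, and `1 + y ≤ exp y`.
-/

open Finset Real

namespace Real

-- The difference has derivative `exp (-y) + y - 1 ≥ 0` on all of `ℝ`, so it is monotone.
theorem exp_neg_le_one_sub_add_sq_div_two {x : ℝ} (hx : 0 ≤ x) :
    exp (-x) ≤ 1 - x + x ^ 2 / 2 := by
  let g : ℝ → ℝ := fun y => 1 - y + y ^ 2 / 2 - exp (-y)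
  have hg : ∀ y, HasDerivAt g (-1 + y + exp (-y)) y := fun y => by
    simpa using (((hasDerivAt_id y).const_sub 1).fun_add ((hasDerivAt_pow 2 y).div_const 2)).fun_sub
      (hasDerivAt_neg y).exp
  have hg_mono : Monotone g := monotone_of_deriv_nonneg (fun y => (hg y).differentiableAt)
    fun y => by rw [(hg y).deriv]; linarith [add_one_le_exp (-y)]
  have := hg_mono hx
  simp only [g, neg_zero, exp_zero] at this
  linarith

end Real

theorem sum_mul_exp_neg_mul_le_exp {ι : Type*} (s : Finset ι) (p ℓ : ι → ℝ) {η : ℝ}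
    (hη : 0 ≤ η) (hℓ : ∀ i ∈ s, 0 ≤ ℓ i) (hp : ∀ i ∈ s, 0 ≤ p i) (hp_sum : ∑ i ∈ s, p i = 1) :
    ∑ i ∈ s, p i * exp (-η * ℓ i) ≤
      exp (-η * ∑ i ∈ s, p i * ℓ i + (η ^ 2 / 2) * ∑ i ∈ s, p i * ℓ i ^ 2) := by
  have h_expand : ∑ i ∈ s, p i * (1 - η * ℓ i + (η * ℓ i) ^ 2 / 2) =
      ∑ i ∈ s, p i - η * ∑ i ∈ s, p i * ℓ i + (η ^ 2 / 2) * ∑ i ∈ s, p i * ℓ i ^ 2 := by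
    simp only [mul_sum, ← sum_sub_distrib, ← sum_add_distrib]
    exact sum_congr rfl fun i _ => by ring
  calc ∑ i ∈ s, p i * exp (-η * ℓ i)
      ≤ ∑ i ∈ s, p i * (1 - η * ℓ i + (η * ℓ i) ^ 2 / 2) := by
        refine sum_le_sum fun i hi => mul_le_mul_of_nonneg_left ?_ (hp i hi)
        rw [neg_mul]
        exact exp_neg_le_one_sub_add_sq_div_two (mul_nonneg hη (hℓ i hi))
    _ = (-η * ∑ i ∈ s, p i * ℓ i + (η ^ 2 / 2) * ∑ i ∈ s, p i * ℓ i ^ 2) + 1 := by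
        rw [h_expand, hp_sum]; ring
    _ ≤ _ := add_one_le_exp _

theorem potential_one_step_bound (N : ℕ) (W ℓ : Fin N → ℝ) (η' : ℝ)
    (hη : 0 < η') (hW : ∀ i, 0 < W i) (hℓ : ∀ i, 0 ≤ ℓ i)
    (p : Fin N → ℝ) (hp : ∀ i, p i = W i / ∑ k, W k) :
    (∑ i, W i * Real.exp (-η' * ℓ i)) / (∑ i, W i) ≤
      Real.exp (-η' * ∑ i, p i * ℓ i + (η' ^ 2 / 2) * ∑ i, p i * (ℓ i) ^ 2) := by
  rcases (sum_nonneg fun i _ => (hW i).le : 0 ≤ ∑ i, W i).eq_or_lt with hS | hS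
  · rw [← hS, div_zero]
    exact (exp_pos _).le
  have hp_sum : ∑ i, p i = 1 := by simp_rw [hp, ← sum_div, div_self hS.ne']
  have h_normalize : (∑ i, W i * exp (-η' * ℓ i)) / ∑ i, W i = ∑ i, p i * exp (-η' * ℓ i) := by
    simp_rw [sum_div, hp, div_mul_eq_mul_div]
  rw [h_normalize]
  exact sum_mul_exp_neg_mul_le_exp _ p ℓ hη.le (fun i _ => hℓ i)
    (fun i _ => hp i ▸ div_nonneg (hW i).le hS.le) hp_sum
end
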